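/- Let q : (K,G) → (L,G) be an open extension of topological dynamical systems such that the uniform enveloping semigroupoid E_u(q) is compact. Then E_u(q) is transitive — i.e. for all l, l' ∈ L there exists θ ∈ E_u(q) with s(θ) = l and r(θ) = l' — if and only if the smallest closed equivalence relation on L containing the orbit relation {(l, g·l) : l ∈ L, g ∈ G} equals L × L. -/

import Mathlib

open Filter Topology Set Function MeasureTheory

/-- A continuous fiber map between the fibers of the bundles `p : X → L` and `q : Y → L'`:
an element of `C_p^q(X,Y)` with source `src` and range `rng`. -/
structure FiberMap {X L Y L' : Type} [TopologicalSpace X] [TopologicalSpace Y]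
    (p : X → L) (q : Y → L') where
  src : L
  rng : L'
  toFun : {x : X // p x = src} → Y
  maps_to : ∀ x, q (toFun x) = rng
  continuous_toFun : Continuous toFun

/-- The compact-open topology on `C_p^q(X,Y)`, generated by the sets
`W(C,O) = {θ | θ(C ∩ X_{s(θ)}) ⊆ O}` for `C ⊆ X` compact and `O ⊆ Y` open. -/
def fiberCO {X L Y L' : Type} [TopologicalSpace X] [TopologicalSpace Y]
    (p : X → L) (q : Y → L') : TopologicalSpace (FiberMap p q) :=
  TopologicalSpace.generateFrom
    {W | ∃ (C : Set X) (O : Set Y), IsCompact C ∧ IsOpen O ∧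
      W = {θ : FiberMap p q | ∀ x : {x : X // p x = θ.src}, (x : X) ∈ C → θ.toFun x ∈ O}}

instance fiberMapTopology {X L Y L' : Type} [TopologicalSpace X] [TopologicalSpace Y]
    (p : X → L) (q : Y → L') : TopologicalSpace (FiberMap p q) :=
  fiberCO p q

/-- Composition `η ∘ θ` of continuous fiber maps in `C_q^q(K,K)` with `r(θ) = s(η)`. -/
def FiberMap.comp {K L : Type} [TopologicalSpace K] {q : K → L}
    (η θ : FiberMap q q) (h : θ.rng = η.src) : FiberMap q q where
  src := θ.src
  rng := η.rng
  toFun x := η.toFun ⟨θ.toFun x, (θ.maps_to x).trans h⟩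
  maps_to x := η.maps_to _
  continuous_toFun := η.continuous_toFun.comp
    (θ.continuous_toFun.subtype_mk fun x => (θ.maps_to x).trans h)

/-- A set of fiber maps is a subsemigroupoid if it is closed under composition of
composable elements. -/
def IsSubsemigroupoid {K L : Type} [TopologicalSpace K] {q : K → L}
    (S : Set (FiberMap q q)) : Prop :=
  ∀ θ ∈ S, ∀ η ∈ S, ∀ h : θ.rng = η.src, FiberMap.comp η θ h ∈ S

/-- The set `S(q)` of transition maps `φ_g|_{K_l} : K_l → K_{g•l}`. -/
def transitionSet (G : Type) {K L : Type} [Group G] [TopologicalSpace K]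
    [MulAction G K] [MulAction G L] (q : K → L) : Set (FiberMap q q) :=
  {θ | ∃ g : G, θ.rng = g • θ.src ∧ ∀ x : {x : K // q x = θ.src}, θ.toFun x = g • (x : K)}

/-- The uniform enveloping semigroupoid `E_u(q)`: the smallest subsemigroupoid of
`C_q^q(K,K)` containing `S(q)` that is closed in the compact-open topology. -/
def uniformEnveloping (G : Type) {K L : Type} [Group G] [TopologicalSpace K]
    [MulAction G K] [MulAction G L] (q : K → L) : Set (FiberMap q q) :=
  ⋂₀ {S : Set (FiberMap q q) | transitionSet G q ⊆ S ∧ IsSubsemigroupoid S ∧ IsClosed S}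

/-- The smallest closed equivalence relation on `L` containing the relation `R`. -/
def smallestClosedEquiv {L : Type} [TopologicalSpace L] (R : Set (L × L)) : Set (L × L) :=
  ⋂₀ {E : Set (L × L) | R ⊆ E ∧ IsClosed E ∧ (∀ l : L, (l, l) ∈ E) ∧
    (∀ a b : L, (a, b) ∈ E → (b, a) ∈ E) ∧
    (∀ a b c : L, (a, b) ∈ E → (b, c) ∈ E → (a, c) ∈ E)}

/-!
The relation `{(s(θ), r(θ)) | θ ∈ E_u(q)}` is exactly the smallest closed equivalence relation
containing the orbit relation. It contains the orbit relation (transition maps), is transitive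
(composition), is closed as a continuous image of the compact `E_u(q)`, and is reflexive and
symmetric since with `(l, g • l)` it also contains `(g • l, g⁻¹ • g • l)`. Conversely, pulling a
closed transitive relation back along `θ ↦ (s(θ), r(θ))` gives a closed subsemigroupoid
containing `S(q)`, hence containing `E_u(q)`.
-/

namespace FiberMap

variable {X L Y L' : Type} [TopologicalSpace X] [TopologicalSpace Y] {p : X → L} {q : Y → L'}

def ends (θ : FiberMap p q) : L × L' := (θ.src, θ.rng)

theorem isOpen_setOf_mapsTo {C : Set X} {O : Set Y} (hC : IsCompact C) (hO : IsOpen O) :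
    IsOpen {θ : FiberMap p q | ∀ x : {x : X // p x = θ.src}, (x : X) ∈ C → θ.toFun x ∈ O} :=
  TopologicalSpace.GenerateOpen.basic _ ⟨C, O, hC, hO, rfl⟩

variable [CompactSpace X]

-- Surjectivity of `p` makes every fibre nonempty, so a fibre map with source in `U` is exactly
-- one that sends no point of `p⁻¹(Uᶜ)` anywhere.
theorem continuous_src [TopologicalSpace L] (hp : Continuous p) (hps : Surjective p) :
    Continuous (src : FiberMap p q → L) := by
  refine continuous_def.2 fun U hU => ?_
  convert isOpen_setOf_mapsTo (p := p) (q := q)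
    (hU.isClosed_compl.preimage hp).isCompact isOpen_empty using 1
  ext θ
  obtain ⟨x, hx⟩ := hps θ.src
  simp only [mem_preimage, mem_ofPred_eq, mem_compl_iff, mem_empty_iff_false, imp_false, not_not]
  exact ⟨fun h y => by rwa [y.2], fun h => by simpa [hx] using h ⟨x, hx⟩⟩

theorem continuous_rng [TopologicalSpace L'] (hq : Continuous q) (hps : Surjective p) :
    Continuous (rng : FiberMap p q → L') := by
  refine continuous_def.2 fun U hU => ?_
  convert isOpen_setOf_mapsTo (p := p) (q := q) isCompact_univ (hU.preimage hq) using 1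
  ext θ
  obtain ⟨x, hx⟩ := hps θ.src
  simp only [mem_preimage, mem_ofPred_eq, mem_univ, true_imp_iff, θ.maps_to]
  exact ⟨fun h _ => h, fun h => h ⟨x, hx⟩⟩

theorem continuous_ends [TopologicalSpace L] [TopologicalSpace L'] (hp : Continuous p)
    (hps : Surjective p) (hq : Continuous q) : Continuous (ends : FiberMap p q → L × L') :=
  (continuous_src hp hps).prodMk (continuous_rng hq hps)

end FiberMap

open FiberMap

section Enveloping

variable {G K L : Type} [Group G] [TopologicalSpace K] [MulAction G K] [MulAction G L]
  {q : K → L}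

theorem transitionSet_subset_uniformEnveloping : transitionSet G q ⊆ uniformEnveloping G q :=
  fun _ hθ => mem_sInter.2 fun _ hS => hS.1 hθ

theorem isSubsemigroupoid_uniformEnveloping : IsSubsemigroupoid (uniformEnveloping G q) :=
  fun θ hθ η hη h => mem_sInter.2 fun S hS =>
    hS.2.1 θ (mem_sInter.1 hθ S hS) η (mem_sInter.1 hη S hS) h

theorem uniformEnveloping_subset {S : Set (FiberMap q q)} (hS : transitionSet G q ⊆ S)
    (hSsub : IsSubsemigroupoid S) (hSc : IsClosed S) : uniformEnveloping G q ⊆ S :=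
  sInter_subset_of_mem ⟨hS, hSsub, hSc⟩

theorem exists_mem_transitionSet [ContinuousConstSMul G K]
    (heq : ∀ (g : G) (x : K), q (g • x) = g • q x) (g : G) (l : L) :
    ∃ θ ∈ transitionSet G q, θ.ends = (l, g • l) :=
  ⟨{ src := l
     rng := g • l
     toFun := fun x => g • (x : K)
     maps_to := fun x => by rw [heq, x.2]
     continuous_toFun := (continuous_const_smul g).comp continuous_subtype_val },
    ⟨g, rfl, fun _ => rfl⟩, rfl⟩

theorem image_ends_uniformEnveloping_subset [CompactSpace K] [TopologicalSpace L]
    (hq : Continuous q) (hqs : Surjective q) {E : Set (L × L)}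
    (hE : {z : L × L | ∃ g : G, g • z.1 = z.2} ⊆ E) (hEc : IsClosed E)
    (hEtrans : ∀ a b c : L, (a, b) ∈ E → (b, c) ∈ E → (a, c) ∈ E) :
    ends '' uniformEnveloping G q ⊆ E := by
  refine image_subset_iff.2 <|
    uniformEnveloping_subset ?_ ?_ (hEc.preimage (continuous_ends hq hqs hq))
  · rintro θ ⟨g, hg, -⟩
    exact hE ⟨g, hg.symm⟩
  · intro θ hθ η hη h
    exact hEtrans θ.src θ.rng η.rng hθ (h ▸ hη)

theorem image_ends_trans {S : Set (FiberMap q q)} (hS : IsSubsemigroupoid S) {a b c : L}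
    (hab : (a, b) ∈ ends '' S) (hbc : (b, c) ∈ ends '' S) : (a, c) ∈ ends '' S := by
  obtain ⟨θ, hθ, hθab⟩ := hab
  obtain ⟨η, hη, hηbc⟩ := hbc
  simp only [ends, Prod.mk.injEq] at hθab hηbc
  have hcomposable : θ.rng = η.src := hθab.2.trans hηbc.1.symm
  exact ⟨comp η θ hcomposable, hS θ hθ η hη hcomposable, Prod.ext hθab.1 hηbc.2⟩

end Enveloping

theorem smallestClosedEquiv_subset {L : Type} [TopologicalSpace L] {R E : Set (L × L)}
    (hR : R ⊆ E) (hEc : IsClosed E) (hErefl : ∀ l : L, (l, l) ∈ E)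
    (hEsymm : ∀ a b : L, (a, b) ∈ E → (b, a) ∈ E)
    (hEtrans : ∀ a b c : L, (a, b) ∈ E → (b, c) ∈ E → (a, c) ∈ E) :
    smallestClosedEquiv R ⊆ E :=
  sInter_subset_of_mem ⟨hR, hEc, hErefl, hEsymm, hEtrans⟩

-- The symmetric part `T ∩ T⁻¹` of `T` is a closed equivalence relation containing `R`.
theorem smallestClosedEquiv_subset_of_trans {L : Type} [TopologicalSpace L]
    {R T : Set (L × L)} (hR : R ⊆ T) (hRswap : Prod.swap ⁻¹' R ⊆ T) (hTc : IsClosed T)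
    (hTrefl : ∀ l : L, (l, l) ∈ T)
    (hTtrans : ∀ a b c : L, (a, b) ∈ T → (b, c) ∈ T → (a, c) ∈ T) :
    smallestClosedEquiv R ⊆ T :=
  (smallestClosedEquiv_subset (E := T ∩ Prod.swap ⁻¹' T)
    (fun z hz => ⟨hR hz, hRswap (by simpa using hz)⟩)
    (hTc.inter (hTc.preimage continuous_swap)) (fun l => ⟨hTrefl l, hTrefl l⟩)
    (fun _ _ h => ⟨h.2, h.1⟩)
    (fun a b c hab hbc => ⟨hTtrans a b c hab.1 hbc.1, hTtrans c b a hbc.2 hab.2⟩)).trans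
    inter_subset_left

theorem image_ends_uniformEnveloping_eq_smallestClosedEquiv {G K L : Type} [Group G]
    [TopologicalSpace K] [CompactSpace K] [TopologicalSpace L] [T2Space L] [MulAction G K]
    [ContinuousConstSMul G K] [MulAction G L] {q : K → L} (hq : Continuous q)
    (hqs : Surjective q) (heq : ∀ (g : G) (x : K), q (g • x) = g • q x)
    (hcomp : IsCompact (uniformEnveloping G q)) :
    ends '' uniformEnveloping G q =
      smallestClosedEquiv {z : L × L | ∃ g : G, g • z.1 = z.2} := by
  have horbit (g : G) (l : L) : (l, g • l) ∈ ends '' uniformEnveloping G q :=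
    let ⟨θ, hθ, hends⟩ := exists_mem_transitionSet heq g l
    ⟨θ, transitionSet_subset_uniformEnveloping hθ, hends⟩
  apply subset_antisymm
  · refine subset_sInter fun E ⟨hE, hEc, _, _, hEtrans⟩ => ?_
    exact image_ends_uniformEnveloping_subset hq hqs hE hEc hEtrans
  · refine smallestClosedEquiv_subset_of_trans ?_ ?_
      (hcomp.image (continuous_ends hq hqs hq)).isClosed (fun l => by simpa using horbit 1 l)
      fun _ _ _ => image_ends_trans isSubsemigroupoid_uniformEnveloping
    · rintro ⟨a, b⟩ ⟨g, hg⟩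
      obtain rfl : g • a = b := hg
      exact horbit g a
    · rintro ⟨a, b⟩ ⟨g, hg⟩
      obtain rfl : g • b = a := hg
      simpa using horbit g⁻¹ (g • b)

theorem statement11_general {G K L : Type} [Group G] [TopologicalSpace G]
    [TopologicalSpace K] [CompactSpace K]
    [TopologicalSpace L] [T2Space L]
    [MulAction G K] [ContinuousSMul G K] [MulAction G L]
    (q : K → L) (hq : Continuous q) (hqs : Function.Surjective q)
    (heq : ∀ (g : G) (x : K), q (g • x) = g • q x)
    (hcomp : IsCompact (uniformEnveloping G q)) :
    (∀ l l' : L, ∃ θ ∈ uniformEnveloping G q, θ.src = l ∧ θ.rng = l') ↔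
      smallestClosedEquiv {z : L × L | ∃ g : G, g • z.1 = z.2} = Set.univ := by
  rw [← image_ends_uniformEnveloping_eq_smallestClosedEquiv hq hqs heq hcomp, eq_univ_iff_forall]
  simp only [Prod.forall, mem_image, ends, Prod.mk.injEq]

/-- For an open extension with compact uniform enveloping semigroupoid `E_u(q)`, the
semigroupoid `E_u(q)` is transitive if and only if the smallest closed equivalence
relation on `L` containing the orbit relation is all of `L × L`. -/
theorem statement11 {G K L : Type} [Group G] [TopologicalSpace G] [IsTopologicalGroup G]
    [T2Space G] [TopologicalSpace K] [CompactSpace K] [T2Space K] [Nonempty K]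
    [TopologicalSpace L] [CompactSpace L] [T2Space L] [Nonempty L]
    [MulAction G K] [ContinuousSMul G K] [MulAction G L] [ContinuousSMul G L]
    (q : K → L) (hq : Continuous q) (hqs : Function.Surjective q) (hqo : IsOpenMap q)
    (heq : ∀ (g : G) (x : K), q (g • x) = g • q x)
    (hcomp : IsCompact (uniformEnveloping G q)) :
    (∀ l l' : L, ∃ θ ∈ uniformEnveloping G q, θ.src = l ∧ θ.rng = l') ↔
      smallestClosedEquiv {z : L × L | ∃ g : G, g • z.1 = z.2} = Set.univ :=
  statement11_general q hq hqs heq hcomp
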